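/- Let ⦀·⦀ be a norm on ℝ^d. The following are equivalent: (i) ⦀·⦀ is orthant-monotonic; (ii) ⦀x⦀ = ⦀x⦀^top_d for all x ∈ ℝ^d (the norm coincides with its generalized top-d norm); (iii) ⦀y⦀⋆ = ⦀y⦀^supp_d for all y ∈ ℝ^d (the dual norm coincides with the generalized d-support norm). -/

import Mathlib

open Finset Set

namespace OSMPaper

variable {d : ℕ}

/-- Standard inner product on `ℝ^d = Fin d → ℝ`. -/
def dot (x y : Fin d → ℝ) : ℝ := ∑ i, x i * y i

/-- `N` is a norm on `ℝ^d`. -/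
def IsNorm (N : (Fin d → ℝ) → ℝ) : Prop :=
  (∀ x, 0 ≤ N x) ∧ (∀ x, N x = 0 ↔ x = 0) ∧
  (∀ (c : ℝ) (x : Fin d → ℝ), N (c • x) = |c| * N x) ∧
  (∀ x y, N (x + y) ≤ N x + N y)

/-- `proj K x = x_K`, the vector coinciding with `x` on `K` and zero outside `K`. -/
def proj (K : Finset (Fin d)) (x : Fin d → ℝ) : Fin d → ℝ :=
  fun i => if i ∈ K then x i else 0

/-- The coordinate subspace `ℝ_K`. -/
def coordSubspace (K : Finset (Fin d)) : Set (Fin d → ℝ) :=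
  {x | ∀ j, j ∉ K → x j = 0}

/-- Orthant-monotonic norm. -/
def OrthantMonotonic (N : (Fin d → ℝ) → ℝ) : Prop :=
  ∀ x x' : Fin d → ℝ, (∀ i, |x i| ≤ |x' i|) → (∀ i, 0 ≤ x i * x' i) → N x ≤ N x'

/-- Orthant-strictly monotonic norm. -/
def OrthantStrictlyMonotonic (N : (Fin d → ℝ) → ℝ) : Prop :=
  ∀ x x' : Fin d → ℝ, (∀ i, |x i| ≤ |x' i|) → (∃ j, |x j| < |x' j|) →
    (∀ i, 0 ≤ x i * x' i) → N x < N x'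

/-- Dual norm `⦀y⦀⋆ = sup_{N x ≤ 1} ⟨x, y⟩`. -/
noncomputable def dualNorm (N : (Fin d → ℝ) → ℝ) (y : Fin d → ℝ) : ℝ :=
  sSup {r | ∃ x, N x ≤ 1 ∧ r = dot x y}

/-- Support function of a set `S`. -/
noncomputable def suppFn (S : Set (Fin d → ℝ)) (y : Fin d → ℝ) : ℝ :=
  sSup {r | ∃ x ∈ S, r = dot x y}

/-- Generalized top-`k` norm associated with the source norm `N`. -/
noncomputable def topNorm (N : (Fin d → ℝ) → ℝ) (k : ℕ) (x : Fin d → ℝ) : ℝ :=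
  sSup {r | ∃ K : Finset (Fin d), K.card ≤ k ∧ r = N (proj K x)}

/-- Generalized `k`-support norm: the dual norm of the generalized top-`k` norm. -/
noncomputable def supportNorm (N : (Fin d → ℝ) → ℝ) (k : ℕ) : (Fin d → ℝ) → ℝ :=
  dualNorm (topNorm N k)

/-- The ℓ0 pseudonorm: the number of nonzero components. -/
noncomputable def l0 (x : Fin d → ℝ) : ℕ := Set.ncard {i | x i ≠ 0}

/-- `x` is an extreme point of the convex set `C`. -/
def ExtremePt (C : Set (Fin d → ℝ)) (x : Fin d → ℝ) : Prop :=
  x ∈ C ∧ ∀ y ∈ C, ∀ z ∈ C, ∀ t : ℝ, 0 < t → t < 1 →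
    x = t • y + (1 - t) • z → y = x ∧ z = x

/-!
If `‖·‖` is orthant-monotonic then `‖x_K‖ ≤ ‖x‖`, so the supremum defining the top-`d` norm is
attained at `K = univ`. Conversely, if `‖x_K‖ ≤ ‖x‖` for all `K`, then moving one coordinate of `x`
towards `0` stays on the segment from `x` to `x` with that coordinate erased, so by convexity the
norm does not grow; shrinking the coordinates one at a time gives orthant-monotonicity.

For the dual norms, `‖·‖ ≤ ‖·‖^top_d` always. For the reverse inequality, Hahn–Banach gives at each
`x` a linear functional `⟨·, y⟩` dominated by the sublinear function `‖·‖^top_d` and equal to it at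
`x`; then `y` lies in the dual unit ball of `‖·‖^top_d`, which by assumption is that of `‖·‖`, so
`‖x‖^top_d = ⟨x, y⟩ ≤ ‖x‖`.
-/

structure IsSublinear {E : Type*} [AddCommGroup E] [Module ℝ E] (p : E → ℝ) : Prop where
  smul_of_pos : ∀ c : ℝ, 0 < c → ∀ x, p (c • x) = c * p x
  add_le : ∀ x y, p (x + y) ≤ p x + p y

namespace IsSublinear

variable {E : Type*} [AddCommGroup E] [Module ℝ E] {p : E → ℝ}

theorem map_zero (hp : IsSublinear p) : p 0 = 0 := by
  have h := hp.smul_of_pos 2 two_pos 0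
  rw [smul_zero] at h
  linarith

theorem smul_of_nonneg (hp : IsSublinear p) {c : ℝ} (hc : 0 ≤ c) (x : E) :
    p (c • x) = c * p x := by
  rcases hc.eq_or_lt with rfl | hc
  · rw [zero_smul, zero_mul, hp.map_zero]
  · exact hp.smul_of_pos c hc x

theorem mul_le (hp : IsSublinear p) (c : ℝ) (x : E) : c * p x ≤ p (c • x) := by
  rcases le_or_gt 0 c with hc | hc
  · exact (hp.smul_of_nonneg hc x).ge
  · have h := hp.add_le (c • x) ((-c) • x)
    rw [← add_smul, add_neg_cancel, zero_smul, hp.map_zero,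
      hp.smul_of_pos (-c) (neg_pos.mpr hc)] at h
    linarith

theorem convexOn (hp : IsSublinear p) : ConvexOn ℝ univ p :=
  ⟨convex_univ, fun x _ y _ a b ha hb _ => by
    rw [smul_eq_mul, smul_eq_mul, ← hp.smul_of_nonneg ha, ← hp.smul_of_nonneg hb]
    exact hp.add_le _ _⟩

theorem exists_linearMap_le_eq (hp : IsSublinear p) (x : E) :
    ∃ g : E →ₗ[ℝ] ℝ, (∀ z, g z ≤ p z) ∧ g x = p x := by
  have hker : ∀ c : ℝ, c • x = 0 → c • p x = 0 := fun c hc => by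
    rcases smul_eq_zero.mp hc with rfl | rfl
    · exact zero_smul ℝ _
    · rw [hp.map_zero, smul_zero]
  obtain ⟨g, hgf, hgp⟩ := exists_extension_of_le_sublinear
    (LinearPMap.mkSpanSingleton' x (p x) hker) p hp.smul_of_pos hp.add_le (by
      rintro ⟨_, hz⟩
      obtain ⟨c, rfl⟩ := Submodule.mem_span_singleton.mp hz
      rw [LinearPMap.mkSpanSingleton'_apply, smul_eq_mul]
      exact hp.mul_le c x)
  exact ⟨g, hgp, (hgf ⟨x, Submodule.mem_span_singleton_self x⟩).trans
    (LinearPMap.mkSpanSingleton'_apply_self _ _ _ _)⟩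

end IsSublinear

theorem exists_dot_le_eq_of_isSublinear {p : (Fin d → ℝ) → ℝ} (hp : IsSublinear p)
    (x : Fin d → ℝ) : ∃ y, (∀ z, dot z y ≤ p z) ∧ dot x y = p x := by
  obtain ⟨g, hgp, hgx⟩ := hp.exists_linearMap_le_eq x
  have hg : ∀ z, dot z (fun i => g fun j => if i = j then 1 else 0) = g z := fun z => by
    simp [dot, g.pi_apply_eq_sum_univ z]
  exact ⟨_, fun z => (hg z).trans_le (hgp z), (hg x).trans hgx⟩

theorem dot_le_norm_mul (x y : Fin d → ℝ) : dot x y ≤ ‖x‖ * ∑ i, |y i| := by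
  rw [dot, Finset.mul_sum]
  refine Finset.sum_le_sum fun i _ => ?_
  calc x i * y i ≤ |x i| * |y i| := by rw [← abs_mul]; exact le_abs_self _
    _ ≤ ‖x‖ * |y i| := by
      gcongr
      exact (Real.norm_eq_abs (x i)).symm.trans_le (norm_le_pi_norm x i)

namespace IsNorm

variable {N : (Fin d → ℝ) → ℝ}

theorem isSublinear (hN : IsNorm N) : IsSublinear N :=
  ⟨fun c hc x => by rw [hN.2.2.1, abs_of_pos hc], hN.2.2.2⟩

theorem continuous (hN : IsNorm N) : Continuous N :=
  continuousOn_univ.mp (by simpa using hN.isSublinear.convexOn.continuousOn_interior)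

theorem exists_pos_mul_norm_le (hN : IsNorm N) : ∃ m, 0 < m ∧ ∀ x, m * ‖x‖ ≤ N x := by
  obtain ⟨m, hm, hmN⟩ := (isCompact_sphere (0 : Fin d → ℝ) 1).exists_forall_le'
    hN.continuous.continuousOn (a := 0) fun z hz =>
      lt_of_le_of_ne (hN.1 z) fun h => by
        simp [(hN.2.1 z).mp h.symm] at hz
  refine ⟨m, hm, fun x => ?_⟩
  rcases eq_or_ne x 0 with rfl | hx
  · simp [hN.1]
  have hnx : 0 < ‖x‖ := norm_pos_iff.mpr hx
  have hunit : ‖x‖⁻¹ • x ∈ Metric.sphere (0 : Fin d → ℝ) 1 := by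
    simp [norm_smul, hnx.ne']
  calc m * ‖x‖ ≤ N (‖x‖⁻¹ • x) * ‖x‖ := by gcongr; exact hmN _ hunit
    _ = N x := by
      rw [hN.isSublinear.smul_of_pos _ (inv_pos.mpr hnx), mul_right_comm,
        inv_mul_cancel₀ hnx.ne', one_mul]

theorem bddAbove_dualSet (hN : IsNorm N) (y : Fin d → ℝ) :
    BddAbove {r | ∃ x, N x ≤ 1 ∧ r = dot x y} := by
  obtain ⟨m, hm, hmN⟩ := hN.exists_pos_mul_norm_le
  refine ⟨m⁻¹ * ∑ i, |y i|, ?_⟩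
  rintro r ⟨x, hx, rfl⟩
  have hxm : ‖x‖ ≤ m⁻¹ := by
    rw [← mul_le_mul_iff_right₀ hm, mul_inv_cancel₀ hm.ne']
    linarith [hmN x]
  exact (dot_le_norm_mul x y).trans (by gcongr)

theorem dot_le_mul_dualNorm (hN : IsNorm N) (x y : Fin d → ℝ) :
    dot x y ≤ N x * dualNorm N y := by
  rcases eq_or_ne x 0 with rfl | hx
  · simp [dot, hN.isSublinear.map_zero]
  have hNx : 0 < N x := lt_of_le_of_ne (hN.1 x) fun h => hx ((hN.2.1 x).mp h.symm)
  have hunit : N ((N x)⁻¹ • x) ≤ 1 := by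
    rw [hN.isSublinear.smul_of_pos _ (inv_pos.mpr hNx), inv_mul_cancel₀ hNx.ne']
  have hle : dot ((N x)⁻¹ • x) y ≤ dualNorm N y :=
    le_csSup (hN.bddAbove_dualSet y) ⟨_, hunit, rfl⟩
  have hscale : dot ((N x)⁻¹ • x) y = (N x)⁻¹ * dot x y := by
    simp [dot, Finset.mul_sum, mul_assoc]
  rw [hscale, inv_mul_le_iff₀ hNx] at hle
  exact hle

theorem le_of_dualNorm_le_dualNorm {p : (Fin d → ℝ) → ℝ} (hN : IsNorm N)
    (hp : IsSublinear p) (h : ∀ y, dualNorm N y ≤ dualNorm p y) (x : Fin d → ℝ) : p x ≤ N x := by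
  obtain ⟨y, hyp, hyx⟩ := exists_dot_le_eq_of_isSublinear hp x
  have hdual : dualNorm p y ≤ 1 :=
    csSup_le ⟨_, 0, hp.map_zero.trans_le zero_le_one, rfl⟩ (by
      rintro _ ⟨z, hz, rfl⟩
      exact (hyp z).trans hz)
  calc p x = dot x y := hyx.symm
    _ ≤ N x * dualNorm N y := hN.dot_le_mul_dualNorm x y
    _ ≤ N x := mul_le_of_le_one_right (hN.1 x) ((h y).trans hdual)

end IsNorm

theorem proj_add (K : Finset (Fin d)) (x y : Fin d → ℝ) :
    proj K (x + y) = proj K x + proj K y := by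
  funext i
  by_cases h : i ∈ K <;> simp [proj, h]

theorem proj_smul (K : Finset (Fin d)) (c : ℝ) (x : Fin d → ℝ) :
    proj K (c • x) = c • proj K x := by
  funext i
  by_cases h : i ∈ K <;> simp [proj, h]

theorem proj_univ (x : Fin d → ℝ) : proj Finset.univ x = x := by
  funext i
  simp [proj]

section TopNorm

variable {N : (Fin d → ℝ) → ℝ} {k : ℕ}

theorem bddAbove_topNormSet (x : Fin d → ℝ) :
    BddAbove {r | ∃ K : Finset (Fin d), K.card ≤ k ∧ r = N (proj K x)} :=
  (Set.finite_range fun K : Finset (Fin d) => N (proj K x)).bddAbove.mono <| by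
    rintro _ ⟨K, -, rfl⟩
    exact ⟨K, rfl⟩

theorem le_topNorm {K : Finset (Fin d)} (hK : K.card ≤ k) (x : Fin d → ℝ) :
    N (proj K x) ≤ topNorm N k x :=
  le_csSup (bddAbove_topNormSet x) ⟨K, hK, rfl⟩

theorem le_topNorm_dim {K : Finset (Fin d)} (x : Fin d → ℝ) : N (proj K x) ≤ topNorm N d x :=
  le_topNorm ((Finset.card_le_univ K).trans_eq (Fintype.card_fin d)) x

theorem le_topNorm_self (x : Fin d → ℝ) : N x ≤ topNorm N d x := by
  simpa only [proj_univ] using le_topNorm_dim (N := N) (K := Finset.univ) x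

theorem topNorm_le {x : Fin d → ℝ} {a : ℝ}
    (h : ∀ K : Finset (Fin d), K.card ≤ k → N (proj K x) ≤ a) : topNorm N k x ≤ a :=
  csSup_le ⟨_, ∅, by simp, rfl⟩ <| by
    rintro _ ⟨K, hK, rfl⟩
    exact h K hK

open scoped Pointwise in
theorem IsSublinear.topNorm (hN : IsSublinear N) (k : ℕ) : IsSublinear (topNorm N k) where
  smul_of_pos c hc x := by
    have hset : {r | ∃ K : Finset (Fin d), K.card ≤ k ∧ r = N (proj K (c • x))} =
        c • {r | ∃ K : Finset (Fin d), K.card ≤ k ∧ r = N (proj K x)} := by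
      ext r
      simp [Set.mem_smul_set, proj_smul, hN.smul_of_pos c hc, eq_comm]
    rw [OSMPaper.topNorm, OSMPaper.topNorm, hset, Real.sSup_smul_of_nonneg hc.le, smul_eq_mul]
  add_le x y := topNorm_le fun K hK => by
    rw [proj_add]
    exact (hN.add_le _ _).trans (add_le_add (le_topNorm hK x) (le_topNorm hK y))

end TopNorm

theorem OrthantMonotonic.proj_le {N : (Fin d → ℝ) → ℝ} (hN : OrthantMonotonic N)
    (K : Finset (Fin d)) (x : Fin d → ℝ) : N (proj K x) ≤ N x :=
  hN _ _ (fun i => by by_cases h : i ∈ K <;> simp [proj, h])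
    (fun i => by by_cases h : i ∈ K <;> simp [proj, h, mul_self_nonneg])

theorem mem_uIcc_zero_of_abs_le_of_mul_nonneg {a b : ℝ} (habs : |a| ≤ |b|) (hmul : 0 ≤ a * b) :
    a ∈ uIcc 0 b := by
  rw [Set.mem_uIcc]
  rcases abs_cases a with ⟨ha, ha'⟩ | ⟨ha, ha'⟩ <;> rcases abs_cases b with ⟨hb, hb'⟩ | ⟨hb, hb'⟩
  all_goals first | (left; constructor <;> nlinarith) | (right; constructor <;> nlinarith)

theorem _root_.ConvexOn.update_le {ι : Type*} [DecidableEq ι] {f : (ι → ℝ) → ℝ}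
    (hf : ConvexOn ℝ univ f) {g : ι → ℝ} {a : ι} (h0 : f (Function.update g a 0) ≤ f g) {u : ℝ}
    (hu : u ∈ uIcc 0 (g a)) : f (Function.update g a u) ≤ f g := by
  have hseg : Function.update g a u ∈
      segment ℝ (Function.update g a 0) (Function.update g a (g a)) := by
    rw [← Pi.image_update_segment, segment_eq_uIcc]
    exact mem_image_of_mem _ hu
  rw [Function.update_eq_self] at hseg
  exact (hf.le_on_segment (mem_univ _) (mem_univ _) hseg).trans (max_le h0 le_rfl)

theorem orthantMonotonic_of_proj_le {N : (Fin d → ℝ) → ℝ} (hN : ConvexOn ℝ univ N)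
    (hproj : ∀ K z, N (proj K z) ≤ N z) : OrthantMonotonic N := by
  classical
  intro x x' habs hmul
  have hshrink : ∀ S : Finset (Fin d), N (S.piecewise x x') ≤ N x' := by
    intro S
    induction S using Finset.induction_on with
    | empty => simp
    | insert a S ha ih =>
      rw [Finset.piecewise_insert]
      refine (hN.update_le ?_ ?_).trans ih
      · have herase : Function.update (S.piecewise x x') a 0 =
            proj (univ.erase a) (S.piecewise x x') := by
          funext i
          by_cases hi : i = a
          · subst hi; simp [proj]
          · simp [proj, hi]
        rw [herase]
        exact hproj _ _
      · rw [Finset.piecewise_eq_of_notMem _ _ _ ha]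
        exact mem_uIcc_zero_of_abs_le_of_mul_nonneg (habs a) (hmul a)
  simpa using hshrink univ

theorem orthantMonotonic_iff_eq_topNorm_d_iff_dual_eq_supportNorm_d_general
    (N : (Fin d → ℝ) → ℝ) (hN : IsNorm N) :
    (OrthantMonotonic N ↔ ∀ x : Fin d → ℝ, N x = topNorm N d x) ∧
    (OrthantMonotonic N ↔ ∀ y : Fin d → ℝ, dualNorm N y = supportNorm N d y) := by
  have eq_topNorm_iff : OrthantMonotonic N ↔ ∀ x, N x = topNorm N d x :=
    ⟨fun hOM x => (le_topNorm_self x).antisymm (topNorm_le fun K _ => hOM.proj_le K x),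
      fun h => orthantMonotonic_of_proj_le hN.isSublinear.convexOn fun K z =>
        (le_topNorm_dim z).trans_eq (h z).symm⟩
  refine ⟨eq_topNorm_iff, eq_topNorm_iff.trans ⟨fun h y => ?_, fun h x => ?_⟩⟩
  · exact congrFun (congrArg dualNorm (funext h)) y
  · exact (le_topNorm_self x).antisymm
      (hN.le_of_dualNorm_le_dualNorm (hN.isSublinear.topNorm d) (fun y => (h y).le) x)

/-- a norm is orthant-monotonic iff it coincides with its
generalized top-d norm, iff its dual norm coincides with the generalized
d-support norm. -/
theorem orthantMonotonic_iff_eq_topNorm_d_iff_dual_eq_supportNorm_d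
    (hd : 0 < d) (N : (Fin d → ℝ) → ℝ) (hN : IsNorm N) :
    (OrthantMonotonic N ↔ ∀ x : Fin d → ℝ, N x = topNorm N d x) ∧
    (OrthantMonotonic N ↔ ∀ y : Fin d → ℝ, dualNorm N y = supportNorm N d y) :=
  orthantMonotonic_iff_eq_topNorm_d_iff_dual_eq_supportNorm_d_general N hN

end OSMPaper
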